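/- Let A : Matrix (Fin 3) (Fin 3) ℕ have rows (1,1,1), (1,0,1), (1,0,0) and B : Matrix (Fin 3) (Fin 3) ℕ have rows (0,1,1), (1,1,1), (0,1,0). Then (a) A and B are permutations of each other: there is a permutation σ of Fin 3 with B i j = A (σ i) (σ j) for all i, j; but (b) A and B are not related by the equivalence relation generated by primitive transfer alone: letting PT be the binary relation on 0-1 matrices over Fin 3 with PT X Y iff Y is a primitive transfer of X at some p with some data (K, M), the equivalence relation generated by PT does not relate A and B. -/

import Mathlib

/-- A 0-1 matrix. -/
def IsZeroOne {V : Type*} (B : Matrix V V ℕ) : Prop := ∀ i j, B i j = 0 ∨ B i j = 1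

/-- `C` is the primitive transfer of `B` at `p` with data `(K, M)`. -/
structure IsPrimitiveTransfer {V : Type*} [DecidableEq V] (B C : Matrix V V ℕ)
    (p : V) (K M : Finset V) : Prop where
  zeroOne : IsZeroOne B
  disjKM : Disjoint K M
  p_not_mem_M : p ∉ M
  row_p_nonzero : ∃ j, B p j ≠ 0
  row_m_nonzero : ∀ m ∈ M, ∃ j, B m j ≠ 0
  row_eq : ∀ j, B p j = (if j ∈ K then 1 else 0) + ∑ m ∈ M, B m j
  transfer : ∀ i j, C i j = if i = p then (if j ∈ K ∪ M then 1 else 0) else B i j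

/-- The primitive transfer relation on 0-1 matrices over `Fin 3`. -/
def PT (X Y : Matrix (Fin 3) (Fin 3) ℕ) : Prop :=
  ∃ (p : Fin 3) (K M : Finset (Fin 3)), IsPrimitiveTransfer X Y p K M

/-- The matrix `A` with rows `(1,1,1), (1,0,1), (1,0,0)`. -/
def A : Matrix (Fin 3) (Fin 3) ℕ := !![1,1,1; 1,0,1; 1,0,0]

/-- The matrix `B` with rows `(0,1,1), (1,1,1), (0,1,0)`. -/
def B : Matrix (Fin 3) (Fin 3) ℕ := !![0,1,1; 1,1,1; 0,1,0]

/-!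
A primitive transfer can be undone: since `p ∉ M`, the rows `m ∈ M` are unchanged, and the old
row `p` is `1_K + ∑_{m ∈ M}` of them. Hence a set of 0-1 matrices closed under the transfer and
under its inverse, for all data `(p, K, M)`, is a union of classes of the equivalence relation
generated by PT. A finite check shows that `A` together with two further matrices forms such a
set; it does not contain `B`, although `B` is `A` with the indices `0` and `1` swapped.
-/

-- Instance search does not unfold `Matrix` to find the nested `Fintype` quantifier by itself.
instance {V : Type*} [Fintype V] (X : Matrix V V ℕ) : Decidable (IsZeroOne X) :=
  have (i : V) : Decidable (∀ j, X i j = 0 ∨ X i j = 1) := inferInstance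
  inferInstanceAs (Decidable (∀ i j, X i j = 0 ∨ X i j = 1))

theorem Relation.EqvGen.iff_of_rel_imp_iff {α : Type*} {r : α → α → Prop} {P : α → Prop}
    (hr : ∀ a b, r a b → (P a ↔ P b)) {a b : α} (h : Relation.EqvGen r a b) : P a ↔ P b := by
  induction h with
  | rel a b hab => exact hr a b hab
  | refl => rfl
  | symm _ _ _ ih => exact ih.symm
  | trans _ _ _ _ _ ih₁ ih₂ => exact ih₁.trans ih₂

section PrimitiveTransfer

variable {V : Type*} [DecidableEq V]

def primTransfer (B : Matrix V V ℕ) (p : V) (K M : Finset V) : Matrix V V ℕ :=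
  Matrix.of fun i j => if i = p then (if j ∈ K ∪ M then 1 else 0) else B i j

def primTransferInv (C : Matrix V V ℕ) (p : V) (K M : Finset V) : Matrix V V ℕ :=
  Matrix.of fun i j => if i = p then (if j ∈ K then 1 else 0) + ∑ m ∈ M, C m j else C i j

namespace IsPrimitiveTransfer

variable {B C : Matrix V V ℕ} {p : V} {K M : Finset V}

theorem eq_primTransfer (h : IsPrimitiveTransfer B C p K M) : C = primTransfer B p K M :=
  Matrix.ext h.transfer

theorem apply_self (h : IsPrimitiveTransfer B C p K M) (j : V) :
    C p j = if j ∈ K ∪ M then 1 else 0 := by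
  rw [h.transfer, if_pos rfl]

theorem eq_primTransferInv (h : IsPrimitiveTransfer B C p K M) : B = primTransferInv C p K M := by
  ext i j
  by_cases hi : i = p
  · subst hi
    have hM : ∀ m ∈ M, C m j = B m j := fun m hm ↦ by
      rw [h.transfer, if_neg (ne_of_mem_of_not_mem hm h.p_not_mem_M)]
    simp only [primTransferInv, Matrix.of_apply, ↓reduceIte, h.row_eq, Finset.sum_congr rfl hM]
  · simp only [primTransferInv, Matrix.of_apply, if_neg hi, h.transfer]

end IsPrimitiveTransfer

end PrimitiveTransfer

def ptClassA : Finset (Matrix (Fin 3) (Fin 3) ℕ) :=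
  {A, !![0,0,1; 1,0,1; 1,1,1], !![1,1,1; 1,0,1; 1,1,1]}

theorem primTransfer_mem_ptClassA : ∀ X ∈ ptClassA, ∀ (p : Fin 3) (K M : Finset (Fin 3)),
    Disjoint K M → p ∉ M → (∀ j, X p j = (if j ∈ K then 1 else 0) + ∑ m ∈ M, X m j) →
    primTransfer X p K M ∈ ptClassA := by
  decide

theorem primTransferInv_mem_ptClassA : ∀ Y ∈ ptClassA, ∀ (p : Fin 3) (K M : Finset (Fin 3)),
    (∀ j, Y p j = if j ∈ K ∪ M then 1 else 0) → IsZeroOne (primTransferInv Y p K M) →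
    primTransferInv Y p K M ∈ ptClassA := by
  decide

theorem PT.mem_ptClassA_iff {X Y : Matrix (Fin 3) (Fin 3) ℕ} (h : PT X Y) :
    X ∈ ptClassA ↔ Y ∈ ptClassA := by
  obtain ⟨p, K, M, h⟩ := h
  have hX := h.eq_primTransferInv
  constructor
  · intro hXmem
    rw [h.eq_primTransfer]
    exact primTransfer_mem_ptClassA X hXmem p K M h.disjKM h.p_not_mem_M h.row_eq
  · intro hYmem
    rw [hX]
    exact primTransferInv_mem_ptClassA Y hYmem p K M h.apply_self (hX ▸ h.zeroOne)

theorem stmt_8 :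
    (∃ σ : Equiv.Perm (Fin 3), ∀ i j, B i j = A (σ i) (σ j)) ∧
    ¬ Relation.EqvGen PT A B := by
  refine ⟨⟨Equiv.swap 0 1, fun i j ↦ by fin_cases i <;> fin_cases j <;> rfl⟩, fun h ↦ ?_⟩
  have hA : A ∈ ptClassA := by decide
  have hB : B ∉ ptClassA := by decide
  exact hB ((h.iff_of_rel_imp_iff fun _ _ hXY ↦ hXY.mem_ptClassA_iff).mp hA)
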